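/- For even integers m, n ≥ 2, the Italian domination number of the directed Cartesian product C_m □ C_n equals mn/2. -/

import Mathlib

/-- Adjacency in the underlying (toroidal grid) graph of `C_m □ C_n`:
two vertices are joined iff they differ by `(±1,0)` or `(0,±1)`. -/
def Adj {m n : ℕ} (u v : ZMod m × ZMod n) : Prop :=
  v = u + (1, 0) ∨ v = u + (0, 1) ∨ u = v + (1, 0) ∨ u = v + (0, 1)

/-- A set of vertices is independent if no two of its members are adjacent. -/
def Indep {m n : ℕ} (S : Finset (ZMod m × ZMod n)) : Prop :=
  ∀ u ∈ S, ∀ v ∈ S, ¬ Adj u v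

/-- An Italian dominating function on the digraph `C_m □ C_n`
(arcs `(i,j) → (i+1,j)` and `(i,j) → (i,j+1)`): every vertex assigned `0`
has in-neighbour values summing to at least `2`. -/
def ItalianDF {m n : ℕ} (f : ZMod m × ZMod n → ℕ) : Prop :=
  (∀ v, f v ≤ 2) ∧ ∀ v, f v = 0 → 2 ≤ f (v.1 - 1, v.2) + f (v.1, v.2 - 1)

/-- The set of weights of Italian dominating functions on `C_m □ C_n`. -/
def weights (m n : ℕ) [NeZero m] [NeZero n] : Set ℕ :=
  {w | ∃ f : ZMod m × ZMod n → ℕ, ItalianDF f ∧ ∑ v, f v = w}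

/-!
Every vertex `v` satisfies `2 ≤ 2 f(v) + f(v - a) + f(v - b)`: if `f v = 0` this is the
domination condition, otherwise `2 f(v) ≥ 2`. Summing over the torus, where translations
preserve sums, gives `2mn ≤ 4 ∑ f`. Conversely, when `m` and `n` are even the checkerboard
colouring `(i, j) ↦ i + j mod 2` is well defined, and putting `1` on the even squares dominates
every odd square through both of its in-neighbours, at weight `mn/2`.
-/

section Translation

variable {G : Type*} [AddGroup G] [Fintype G]

theorem card_le_two_mul_sum_of_dominating (a b : G) (f : G → ℕ)
    (hf : ∀ v, f v = 0 → 2 ≤ f (v - a) + f (v - b)) :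
    Fintype.card G ≤ 2 * ∑ v, f v := by
  have hpoint : ∀ v, 2 ≤ 2 * f v + f (v - a) + f (v - b) := by
    intro v
    by_cases hv : f v = 0
    · have := hf v hv
      omega
    · omega
  have hshift : ∀ c : G, ∑ v, f (v - c) = ∑ v, f v := fun c =>
    Fintype.sum_equiv (Equiv.subRight c) _ _ fun _ => rfl
  have hsum : 2 * Fintype.card G ≤ 4 * ∑ v, f v := by
    calc 2 * Fintype.card G = ∑ _v : G, 2 := by simp [mul_comm]
      _ ≤ ∑ v, (2 * f v + f (v - a) + f (v - b)) := Finset.sum_le_sum fun v _ => hpoint v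
      _ = 4 * ∑ v, f v := by
        rw [Finset.sum_add_distrib, Finset.sum_add_distrib, ← Finset.mul_sum, hshift, hshift]
        ring
  omega

end Translation

section Parity

variable {G : Type*} [AddCommGroup G]

def kerIndicator (χ : G →+ ZMod 2) (v : G) : ℕ :=
  if χ v = 0 then 1 else 0

theorem kerIndicator_dominating {χ : G →+ ZMod 2} {a b : G} (ha : χ a = 1) (hb : χ b = 1)
    (v : G) (hv : kerIndicator χ v = 0) :
    2 ≤ kerIndicator χ (v - a) + kerIndicator χ (v - b) := by
  have hodd : χ v = 1 := by
    have key : ∀ x : ZMod 2, (if x = 0 then 1 else 0) = 0 → x = 1 := by decide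
    exact key _ hv
  have hsub : ∀ c, χ c = 1 → χ (v - c) = 0 := by
    intro c hc
    rw [map_sub, hodd, hc, sub_self]
  simp [kerIndicator, hsub a ha, hsub b hb]

theorem two_mul_sum_kerIndicator [Fintype G] {χ : G →+ ZMod 2} {a : G} (ha : χ a = 1) :
    2 * ∑ v, kerIndicator χ v = Fintype.card G := by
  have hflip : ∀ x : ZMod 2, (if x = 0 then 1 else 0) + (if x + 1 = 0 then 1 else 0) = 1 := by
    decide
  have hshift : ∑ v, kerIndicator χ (v + a) = ∑ v, kerIndicator χ v :=
    Fintype.sum_equiv (Equiv.addRight a) _ _ fun _ => rfl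
  calc 2 * ∑ v, kerIndicator χ v = ∑ v, (kerIndicator χ v + kerIndicator χ (v + a)) := by
        rw [Finset.sum_add_distrib, hshift, two_mul]
    _ = ∑ _v : G, 1 := by
        refine Finset.sum_congr rfl fun v _ => ?_
        simpa only [kerIndicator, map_add, ha] using hflip (χ v)
    _ = Fintype.card G := by simp

end Parity

def checkerboard {m n : ℕ} (hm : 2 ∣ m) (hn : 2 ∣ n) : ZMod m × ZMod n →+ ZMod 2 :=
  (ZMod.castHom hm (ZMod 2)).toAddMonoidHom.coprod (ZMod.castHom hn (ZMod 2)).toAddMonoidHom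

theorem checkerboard_apply {m n : ℕ} (hm : 2 ∣ m) (hn : 2 ∣ n) (v : ZMod m × ZMod n) :
    checkerboard hm hn v = ZMod.castHom hm (ZMod 2) v.1 + ZMod.castHom hn (ZMod 2) v.2 :=
  rfl

theorem italianDF_iff_dominating {m n : ℕ} (f : ZMod m × ZMod n → ℕ) :
    ItalianDF f ↔ (∀ v, f v ≤ 2) ∧ ∀ v, f v = 0 → 2 ≤ f (v - (1, 0)) + f (v - (0, 1)) := by
  simp only [ItalianDF, Prod.sub_def, sub_zero]

theorem stmt6_general (m n : ℕ) [NeZero m] [NeZero n]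
    (hme : Even m) (hne : Even n) :
    IsLeast (weights m n) (m * n / 2) := by
  have hcard : Fintype.card (ZMod m × ZMod n) = m * n := by
    simp [Fintype.card_prod, ZMod.card]
  set χ := checkerboard hme.two_dvd hne.two_dvd
  have h10 : χ (1, 0) = 1 := by simp only [χ, checkerboard_apply, map_one, map_zero, add_zero]
  have h01 : χ (0, 1) = 1 := by simp only [χ, checkerboard_apply, map_one, map_zero, zero_add]
  constructor
  · refine ⟨kerIndicator χ, (italianDF_iff_dominating _).2 ⟨fun v => ?_, ?_⟩, ?_⟩
    · unfold kerIndicator; split <;> omega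
    · exact kerIndicator_dominating h10 h01
    · have := two_mul_sum_kerIndicator h10
      omega
  · rintro w ⟨f, hf, rfl⟩
    have := card_le_two_mul_sum_of_dominating _ _ f ((italianDF_iff_dominating f).1 hf).2
    omega

theorem stmt6 (m n : ℕ) [NeZero m] [NeZero n] (hm : 2 ≤ m) (hn : 2 ≤ n)
    (hme : Even m) (hne : Even n) :
    IsLeast (weights m n) (m * n / 2) :=
  stmt6_general m n hme hne
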